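/- For every s ∈ S and w ∈ W̃: if ℓ(sw) = ℓ(w) + 1 then the set product IsIwI equals IswI, while if ℓ(sw) = ℓ(w) − 1 then IsIwI equals the disjoint union of IwI and IswI. -/

import Mathlib

open scoped Pointwise

/-! ## Setting

`G` is a group with subgroups `I` and `N` such that `T := I ⊓ N` is normal in `N`, and
`W̃ := N/T` is presented via a surjective homomorphism `π : N →* W̃` whose kernel consists of
the elements of `N` lying in `I`.  `W̃ = W_aff ⋊ Ω` is an internal semidirect product, where
`W_aff` carries a Coxeter system `cs` (with simple reflections indexed by `B`), the length
function `ℓ` of `cs` is extended to `W̃` by `ℓ (w * u) = ℓ w` for `w ∈ W_aff`, `u ∈ Ω`, and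
the axioms (T0), (T3), (T4), (TΩ), (TS), (TF) hold. -/

/-- The double coset `I·n·I ⊆ G` attached to an element `w ∈ W̃ = N/T`, described as the union
of `I·n·I` over all representatives `n ∈ N` of `w` (these double cosets all coincide, since any
two representatives differ by an element of `T = I ⊓ N ⊆ I`). -/
def IwI {G : Type} [Group G] {W : Type} [Group W] (I : Subgroup G) {N : Subgroup G}
    (π : N →* W) (w : W) : Set G :=
  {g : G | ∃ n : N, π n = w ∧ ∃ i ∈ I, ∃ j ∈ I, g = i * (n : G) * j}

/-- The basis element `i_w = 1_{IwI} : G → ℤ` of the Iwahori–Hecke ring. -/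
noncomputable def iw {G : Type} [Group G] {W : Type} [Group W] (I : Subgroup G) {N : Subgroup G}
    (π : N →* W) (w : W) : G → ℤ :=
  (IwI I π w).indicator fun _ => (1 : ℤ)

/-- Convolution of `ℤ`-valued functions on `G` relative to `I`:
`(f ⋆ f')(x) = Σ_{yI ∈ G/I} f(y)·f'(y⁻¹x)` (the value of `f` at a left coset `yI` is computed
at a chosen representative; this is independent of the choices when `f` is right `I`-invariant
and `f'` is left `I`-invariant). -/
noncomputable def hconv {G : Type} [Group G] (I : Subgroup G) (f f' : G → ℤ) : G → ℤ :=
  fun x => ∑ᶠ y : G ⧸ I, f (Quotient.out y) * f' ((Quotient.out y)⁻¹ * x)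

/-- The left cosets of `I` contained in a (right `I`-stable) subset `A ⊆ G`, viewed as the
image of `A` in `G/I`. -/
def leftCosetsIn {G : Type} [Group G] (I : Subgroup G) (A : Set G) : Set (G ⧸ I) :=
  QuotientGroup.mk '' A

/-- A function `f : G → ℤ` belongs to the Iwahori–Hecke ring `H(G,I)` iff it is left and right
`I`-invariant and vanishes outside finitely many double cosets of `I`. -/
def IsHeckeElt {G : Type} [Group G] {W : Type} [Group W] (I : Subgroup G) {N : Subgroup G}
    (π : N →* W) (f : G → ℤ) : Prop :=
  (∀ i ∈ I, ∀ g : G, f (i * g) = f g) ∧ (∀ i ∈ I, ∀ g : G, f (g * i) = f g) ∧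
    {w : W | ∃ g ∈ IwI I π w, f g ≠ 0}.Finite

/-- The data and axioms of the Iwahori–Matsumoto setting. -/
structure IwahoriHeckeSetup (G W B : Type) [Group G] [Group W] (M : CoxeterMatrix B) where
  /-- the "Iwahori" subgroup -/
  I : Subgroup G
  /-- the subgroup `N` -/
  N : Subgroup G
  /-- the quotient map `N → W̃ = N/T`, `T = I ∩ N` -/
  π : N →* W
  π_surjective : Function.Surjective π
  /-- the kernel of `π` is exactly `T = I ∩ N` (so `T` is normal in `N` and `W̃ = N/T`) -/
  π_ker : ∀ n : N, π n = 1 ↔ (n : G) ∈ I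
  /-- the normal subgroup `W_aff` of `W̃` -/
  Waff : Subgroup W
  /-- the subgroup `Ω` of `W̃` -/
  Om : Subgroup W
  Waff_normal : Waff.Normal
  /-- `W̃ = W_aff · Ω` -/
  sd_prod : ∀ w : W, ∃ wa ∈ Waff, ∃ u ∈ Om, w = wa * u
  /-- `W_aff ∩ Ω = 1` -/
  sd_disj : Waff ⊓ Om = ⊥
  /-- the Coxeter system `(W_aff, S)`, `S = {simple b | b : B}` -/
  cs : CoxeterSystem M Waff
  /-- the length function of `(W_aff, S)`, extended to `W̃` -/
  len : W → ℕ
  len_spec : ∀ (wa : Waff) (u : Om), len ((wa : W) * (u : W)) = cs.length wa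
  /-- `q w` = the number of left cosets of `I` contained in `IwI` -/
  q : W → ℕ
  /-- (T0): `G` is covered by the double cosets `IwI`, `w ∈ W̃` ... -/
  T0_cover : ∀ g : G, ∃ w : W, g ∈ IwI I π w
  /-- (T0): ... and distinct double cosets are disjoint -/
  T0_disjoint : ∀ w w' : W, w ≠ w' → Disjoint (IwI I π w) (IwI I π w')
  /-- (T3): `sIw ⊆ IwI ∪ IswI` for all `s ∈ S`, `w ∈ W̃` -/
  T3 : ∀ (b : B) (w : W) (ns nw : N), π ns = (cs.simple b : W) → π nw = w →
      ∀ i ∈ I, (ns : G) * i * (nw : G) ∈ IwI I π w ∪ IwI I π ((cs.simple b : W) * w)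
  /-- (T4): `sIs ⊄ I` for all `s ∈ S` -/
  T4 : ∀ (b : B) (ns ns' : N), π ns = (cs.simple b : W) → π ns' = (cs.simple b : W) →
      ¬ (∀ i ∈ I, (ns : G) * i * (ns' : G) ∈ I)
  /-- (TΩ): representatives in `N` of elements of `Ω` normalize `I` -/
  TOm : ∀ n : N, π n ∈ Om → ∀ i ∈ I, (n : G) * i * (n : G)⁻¹ ∈ I
  /-- (TS): `uSu⁻¹ = S` for all `u ∈ Ω` -/
  TS : ∀ u ∈ Om, ∀ b : B, ∃ b' : B, u * (cs.simple b : W) * u⁻¹ = (cs.simple b' : W)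
  /-- (TF): every double coset `IwI` is a finite union of left cosets of `I`, and `q w` is
  their number -/
  TF : ∀ w : W, (leftCosetsIn I (IwI I π w)).Finite ∧
      q w = (leftCosetsIn I (IwI I π w)).ncard

/-! If `ℓ(sx) = ℓ(x) + 1` for `x ∈ W_aff`, write `x = y t` with `t` a right descent of `x`. By
induction `IsI · IyI = IsyI`, so `IsI · IxI ⊆ IsyI · ItI ⊆ IsyI ∪ IsxI` by the mirror image of
(T3) (obtained by inversion), while (T3) itself gives `IsI · IxI ⊆ IxI ∪ IsxI`. Neither `sy = x`
nor `sy = sx` is compatible with the lengths, so (T0) forces `IsI · IxI = IsxI`. A general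
`w = x u` with `u ∈ Ω` reduces to this case because `IwI = IxI · IuI` by (TΩ).
If `ℓ(sw) = ℓ(w) − 1`, the first case gives `IwI = IsI · IswI`, and `IsI · IsI = I ∪ IsI` by (T3)
and (T4). -/

open DoubleCoset

theorem CoxeterSystem.length_simple_mul_of_mul_simple {B W : Type} [Group W] {M : CoxeterMatrix B}
    (cs : CoxeterSystem M W) {b t : B} {y : W}
    (hy : cs.length (y * cs.simple t) = cs.length y + 1)
    (h : cs.length (cs.simple b * (y * cs.simple t)) = cs.length (y * cs.simple t) + 1) :
    cs.length (cs.simple b * y) = cs.length y + 1 := by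
  rcases cs.length_simple_mul y b with hsy | hsy
  · exact hsy
  · rcases cs.length_mul_simple (cs.simple b * y) t with h' | h' <;> rw [mul_assoc] at h' <;> omega

section DoubleCosets

variable {G W : Type} [Group G] [Group W] {I N : Subgroup G} (π : N →* W)

theorem mem_IwI_self (n : N) : (n : G) ∈ IwI I π (π n) :=
  ⟨n, rfl, 1, I.one_mem, 1, I.one_mem, by group⟩

theorem mul_mul_mem_IwI {w : W} {i j x : G} (hi : i ∈ I) (hj : j ∈ I) (hx : x ∈ IwI I π w) :
    i * x * j ∈ IwI I π w := by
  obtain ⟨n, hn, a, ha, c, hc, rfl⟩ := hx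
  exact ⟨n, hn, i * a, I.mul_mem hi ha, c * j, I.mul_mem hc hj, by group⟩

theorem IwI_eq_doubleCoset (hker : ∀ n : N, π n = 1 ↔ (n : G) ∈ I) {w : W} {n : N}
    (hn : π n = w) : IwI I π w = doubleCoset (n : G) I I := by
  ext g
  rw [mem_doubleCoset]
  constructor
  · rintro ⟨m, hm, i, hi, j, hj, rfl⟩
    have hnm : ((n⁻¹ * m : N) : G) ∈ I :=
      (hker _).mp (by rw [map_mul, map_inv, hn, hm, inv_mul_cancel])
    exact ⟨i, hi, ((n⁻¹ * m : N) : G) * j, I.mul_mem hnm hj, by push_cast; group⟩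
  · rintro ⟨i, hi, j, hj, rfl⟩
    exact ⟨n, hn, i, hi, j, hj, rfl⟩

theorem IwI_eq_doubleCoset_of_mem (hker : ∀ n : N, π n = 1 ↔ (n : G) ∈ I) {w : W} {x : G}
    (hx : x ∈ IwI I π w) : IwI I π w = doubleCoset x I I := by
  obtain ⟨n, hn, -⟩ := id hx
  rw [IwI_eq_doubleCoset π hker hn] at hx ⊢
  exact (doubleCoset_eq_of_mem hx).symm

theorem IwI_subset_of_mem (hker : ∀ n : N, π n = 1 ↔ (n : G) ∈ I) {A : Set G}
    (hA : (I : Set G) * A * I ⊆ A) {w : W} {x : G} (hx : x ∈ IwI I π w) (hxA : x ∈ A) :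
    IwI I π w ⊆ A := by
  rw [IwI_eq_doubleCoset_of_mem π hker hx, doubleCoset]
  exact (Set.mul_subset_mul_right (Set.mul_subset_mul_left
    (Set.singleton_subset_iff.mpr hxA))).trans hA

theorem IwI_one (hker : ∀ n : N, π n = 1 ↔ (n : G) ∈ I) : IwI I π 1 = I := by
  rw [IwI_eq_doubleCoset π hker (map_one π), doubleCoset, Subgroup.coe_one, Set.singleton_one,
    mul_one, coe_mul_coe]

theorem I_mul_IwI (w : W) : (I : Set G) * IwI I π w = IwI I π w := by
  refine subset_antisymm ?_ fun x hx => ⟨1, I.one_mem, x, hx, one_mul x⟩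
  rintro _ ⟨i, hi, _, ⟨n, hn, a, ha, b, hb, rfl⟩, rfl⟩
  exact ⟨n, hn, i * a, I.mul_mem hi ha, b, hb, by group⟩

theorem IwI_mul_I (w : W) : IwI I π w * I = IwI I π w := by
  refine subset_antisymm ?_ fun x hx => ⟨x, hx, 1, I.one_mem, mul_one x⟩
  rintro _ ⟨_, ⟨n, hn, a, ha, b, hb, rfl⟩, i, hi, rfl⟩
  exact ⟨n, hn, a, ha, b * i, I.mul_mem hb hi, by group⟩

theorem IwI_inv (w : W) : (IwI I π w)⁻¹ = IwI I π w⁻¹ := by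
  have key : ∀ v : W, (IwI I π v)⁻¹ ⊆ IwI I π v⁻¹ := by
    rintro v x ⟨n, hn, i, hi, j, hj, hx⟩
    refine ⟨n⁻¹, by rw [map_inv, hn], j⁻¹, I.inv_mem hj, i⁻¹, I.inv_mem hi, ?_⟩
    rw [← inv_inv x, hx]
    push_cast
    group
  refine subset_antisymm (key w) ?_
  simpa using Set.inv_subset_inv.mpr (key w⁻¹)

theorem IwI_mul_subset (hπ : Function.Surjective π) (v v' : W) :
    IwI I π (v * v') ⊆ IwI I π v * IwI I π v' := by
  rintro _ ⟨m, hm, i, hi, j, hj, rfl⟩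
  obtain ⟨n, hn⟩ := hπ v
  refine ⟨i * n, ⟨n, hn, i, hi, 1, I.one_mem, by group⟩,
    ((n⁻¹ * m : N) : G) * j, ⟨n⁻¹ * m, ?_, 1, I.one_mem, j, hj, by group⟩, by push_cast; group⟩
  rw [map_mul, map_inv, hn, hm, inv_mul_cancel_left]

end DoubleCosets

namespace IwahoriHeckeSetup

variable {G W B : Type} [Group G] [Group W] {M : CoxeterMatrix B}
  (D : IwahoriHeckeSetup G W B M)

theorem simple_mul_self (b : B) : (D.cs.simple b : W) * D.cs.simple b = 1 := by
  rw [← Subgroup.coe_mul, D.cs.simple_mul_simple_self, Subgroup.coe_one]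

theorem simple_inv (b : B) : (D.cs.simple b : W)⁻¹ = D.cs.simple b :=
  inv_eq_of_mul_eq_one_right (D.simple_mul_self b)

theorem IwI_simple_mul_IwI_subset (b : B) (w : W) :
    IwI D.I D.π (D.cs.simple b : W) * IwI D.I D.π w ⊆
      IwI D.I D.π w ∪ IwI D.I D.π ((D.cs.simple b : W) * w) := by
  intro z hz
  obtain ⟨_, ⟨ns, hns, i₁, hi₁, j₁, hj₁, rfl⟩, _, ⟨nw, hnw, i₂, hi₂, j₂, hj₂, rfl⟩, rfl⟩ :=
    Set.mem_mul.mp hz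
  have hmid := D.T3 b w ns nw hns hnw (j₁ * i₂) (D.I.mul_mem hj₁ hi₂)
  rw [show i₁ * ns * j₁ * (i₂ * nw * j₂) = i₁ * (ns * (j₁ * i₂) * nw) * j₂ by group]
  exact hmid.imp (mul_mul_mem_IwI D.π hi₁ hj₂) (mul_mul_mem_IwI D.π hi₁ hj₂)

theorem IwI_simple_mul_IwI_subset_of_subset_union {b : B} {v w : W} (hvw : v ≠ w)
    (hvsw : v ≠ (D.cs.simple b : W) * w)
    (h : IwI D.I D.π (D.cs.simple b : W) * IwI D.I D.π w ⊆
      IwI D.I D.π v ∪ IwI D.I D.π ((D.cs.simple b : W) * w)) :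
    IwI D.I D.π (D.cs.simple b : W) * IwI D.I D.π w ⊆ IwI D.I D.π ((D.cs.simple b : W) * w) := by
  intro z hz
  refine (h hz).resolve_left fun hzv => ?_
  rcases D.IwI_simple_mul_IwI_subset b w hz with hzw | hzsw
  · exact Set.disjoint_left.mp (D.T0_disjoint v w hvw) hzv hzw
  · exact Set.disjoint_left.mp (D.T0_disjoint _ _ hvsw) hzv hzsw

theorem IwI_mul_IwI_simple_subset (b : B) (w : W) :
    IwI D.I D.π w * IwI D.I D.π (D.cs.simple b : W) ⊆
      IwI D.I D.π w ∪ IwI D.I D.π (w * D.cs.simple b) := by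
  have h := Set.inv_subset_inv.mpr (D.IwI_simple_mul_IwI_subset b w⁻¹)
  simpa only [mul_inv_rev, Set.union_inv, IwI_inv, inv_inv, D.simple_inv] using h

theorem IwI_simple_mul_IwI_simple (b : B) :
    IwI D.I D.π (D.cs.simple b : W) * IwI D.I D.π (D.cs.simple b : W) =
      (D.I : Set G) ∪ IwI D.I D.π (D.cs.simple b : W) := by
  set C := IwI D.I D.π (D.cs.simple b : W)
  have hC : (D.I : Set G) * (C * C) * D.I ⊆ C * C := by
    rw [← mul_assoc, I_mul_IwI, mul_assoc, IwI_mul_I]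
  obtain ⟨ns, hns⟩ := D.π_surjective (D.cs.simple b : W)
  have hns_mem : (ns : G) ∈ C := (hns ▸ mem_IwI_self D.π ns : (ns : G) ∈ IwI D.I D.π _)
  refine subset_antisymm ?_ (Set.union_subset ?_ ?_)
  · have h := D.IwI_simple_mul_IwI_subset b (D.cs.simple b : W)
    rwa [D.simple_mul_self, IwI_one D.π D.π_ker, Set.union_comm] at h
  · have hns_inv : ((ns⁻¹ : D.N) : G) ∈ C := by
      simpa [hns, D.simple_inv] using mem_IwI_self D.π ns⁻¹
    rw [← IwI_one D.π D.π_ker]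
    refine IwI_subset_of_mem D.π D.π_ker hC (by simpa using mem_IwI_self D.π (1 : D.N)) ?_
    simpa using Set.mul_mem_mul hns_mem hns_inv
  · obtain ⟨i, hi, hsis⟩ := not_forall₂.mp (D.T4 b ns ns hns hns)
    have hsis_mem : (ns : G) * i * ns ∈ C := by
      have h := D.T3 b _ ns ns hns hns i hi
      rw [D.simple_mul_self, IwI_one D.π D.π_ker, Set.union_comm] at h
      exact h.resolve_left hsis
    refine IwI_subset_of_mem D.π D.π_ker hC hsis_mem (Set.mul_mem_mul ?_ hns_mem)
    exact (IwI_mul_I D.π _).subset (Set.mul_mem_mul hns_mem hi)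

theorem IwI_mul_IwI_of_mem_Om {u : W} (hu : u ∈ D.Om) (v : W) :
    IwI D.I D.π v * IwI D.I D.π u = IwI D.I D.π (v * u) := by
  refine subset_antisymm ?_ (IwI_mul_subset D.π D.π_surjective v u)
  rintro _ ⟨_, ⟨nv, hnv, i₁, hi₁, j₁, hj₁, rfl⟩, _, ⟨nu, hnu, i₂, hi₂, j₂, hj₂, rfl⟩, rfl⟩
  have hconj : ((nu⁻¹ : D.N) : G) * (j₁ * i₂) * ((nu⁻¹ : D.N) : G)⁻¹ ∈ D.I :=
    D.TOm nu⁻¹ (by simpa [hnu] using hu) _ (D.I.mul_mem hj₁ hi₂)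
  refine ⟨nv * nu, by rw [map_mul, hnv, hnu], i₁, hi₁, _ * j₂, D.I.mul_mem hconj hj₂, ?_⟩
  push_cast
  group

theorem IwI_simple_mul_IwI_coe (b : B) (x : D.Waff)
    (hx : D.cs.length (D.cs.simple b * x) = D.cs.length x + 1) :
    IwI D.I D.π (D.cs.simple b : W) * IwI D.I D.π x =
      IwI D.I D.π ((D.cs.simple b : W) * x) := by
  induction hn : D.cs.length x using Nat.strong_induction_on generalizing x with
  | _ n ih =>
    obtain rfl | hx1 := eq_or_ne x 1
    · rw [Subgroup.coe_one, mul_one, IwI_one D.π D.π_ker, IwI_mul_I]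
    obtain ⟨t, ht⟩ := D.cs.exists_rightDescent_of_ne_one hx1
    obtain ⟨y, hxy⟩ : ∃ y, y * D.cs.simple t = x :=
      ⟨x * D.cs.simple t, D.cs.simple_mul_simple_cancel_right t⟩
    have hy : D.cs.length y + 1 = D.cs.length x := by
      have h := D.cs.isRightDescent_iff.mp ht
      rwa [← hxy, D.cs.simple_mul_simple_cancel_right, hxy] at h
    have hsy : D.cs.length (D.cs.simple b * y) = D.cs.length y + 1 :=
      D.cs.length_simple_mul_of_mul_simple (hxy ▸ hy.symm) (hxy ▸ hx)
    have ih_y := ih _ (hn ▸ hy ▸ Nat.lt_succ_self _) y hsy rfl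
    have hup : IwI D.I D.π (D.cs.simple b : W) * IwI D.I D.π x ⊆
        IwI D.I D.π ((D.cs.simple b : W) * y) ∪ IwI D.I D.π ((D.cs.simple b : W) * x) :=
      calc _ ⊆ IwI D.I D.π (D.cs.simple b : W) *
            (IwI D.I D.π y * IwI D.I D.π (D.cs.simple t : W)) := by
            refine Set.mul_subset_mul_left ?_
            rw [← hxy, Subgroup.coe_mul]
            exact IwI_mul_subset D.π D.π_surjective _ _
        _ = IwI D.I D.π ((D.cs.simple b : W) * y) * IwI D.I D.π (D.cs.simple t : W) := by
            rw [← mul_assoc, ih_y]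
        _ ⊆ _ := by
            rw [← hxy, Subgroup.coe_mul, ← mul_assoc]
            exact D.IwI_mul_IwI_simple_subset t _
    refine subset_antisymm (D.IwI_simple_mul_IwI_subset_of_subset_union ?_ ?_ hup)
      (IwI_mul_subset D.π D.π_surjective _ _)
    · intro h
      have hsyx : D.cs.simple b * y = x := Subtype.ext (by simpa using h)
      rw [← hsyx, ← mul_assoc, D.cs.simple_mul_simple_self, one_mul] at hx
      omega
    · intro h
      rw [Subtype.ext (mul_left_cancel h)] at hy
      omega

theorem IwI_simple_mul_IwI (b : B) (w : W)
    (h : D.len ((D.cs.simple b : W) * w) = D.len w + 1) :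
    IwI D.I D.π (D.cs.simple b : W) * IwI D.I D.π w =
      IwI D.I D.π ((D.cs.simple b : W) * w) := by
  obtain ⟨x, hx, u, hu, rfl⟩ := D.sd_prod w
  have hlen : D.cs.length (D.cs.simple b * ⟨x, hx⟩) = D.cs.length ⟨x, hx⟩ + 1 := by
    rw [← D.len_spec _ ⟨u, hu⟩, ← D.len_spec ⟨x, hx⟩ ⟨u, hu⟩, Subgroup.coe_mul, mul_assoc]
    exact h
  rw [← mul_assoc, ← D.IwI_mul_IwI_of_mem_Om hu x, ← D.IwI_mul_IwI_of_mem_Om hu (_ * x),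
    ← mul_assoc]
  exact congrArg (· * _) (D.IwI_simple_mul_IwI_coe b ⟨x, hx⟩ hlen)

end IwahoriHeckeSetup

/-- For every simple reflection `s ∈ S` and `w ∈ W̃`: if `ℓ(sw) = ℓ(w) + 1` then the set
product `IsIwI (= IsI · IwI)` equals `IswI`, while if `ℓ(sw) = ℓ(w) − 1` then `IsIwI` is the
disjoint union of `IwI` and `IswI`. -/
theorem IsIwI_eq {G W B : Type} [Group G] [Group W]
    {M : CoxeterMatrix B} (D : IwahoriHeckeSetup G W B M) (b : B) (w : W) :
    (D.len ((D.cs.simple b : W) * w) = D.len w + 1 →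
      IwI D.I D.π (D.cs.simple b : W) * IwI D.I D.π w =
        IwI D.I D.π ((D.cs.simple b : W) * w)) ∧
    (D.len ((D.cs.simple b : W) * w) + 1 = D.len w →
      IwI D.I D.π (D.cs.simple b : W) * IwI D.I D.π w =
        IwI D.I D.π w ∪ IwI D.I D.π ((D.cs.simple b : W) * w) ∧
      Disjoint (IwI D.I D.π w) (IwI D.I D.π ((D.cs.simple b : W) * w))) := by
  refine ⟨D.IwI_simple_mul_IwI b w, fun h => ?_⟩
  have hs : (D.cs.simple b : W) * ((D.cs.simple b : W) * w) = w := by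
    rw [← mul_assoc, D.simple_mul_self, one_mul]
  have hsw : IwI D.I D.π (D.cs.simple b : W) * IwI D.I D.π ((D.cs.simple b : W) * w) =
      IwI D.I D.π w := by
    rw [D.IwI_simple_mul_IwI b _ (by rw [hs]; omega), hs]
  refine ⟨?_, D.T0_disjoint _ _ fun he => by rw [← he] at h; omega⟩
  rw [← hsw, ← mul_assoc, D.IwI_simple_mul_IwI_simple, Set.union_mul, I_mul_IwI, hsw,
    Set.union_comm]
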